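/- arXiv:2205.04446 — 3 statements merged into one kernel-verified Lean document; each statement's English description precedes it below -/
import Mathlib

section
/- The pseudo-metric d_e coded by a continuous function satisfies the four-point condition: for all s,t,u,v ∈ [0,σ], d_e(s,t) + d_e(u,v) ≤ max( d_e(s,u) + d_e(t,v), d_e(s,v) + d_e(t,u) ). -/
open Set

noncomputable def Minf (e : ℝ → ℝ) (a b : ℝ) : ℝ := sInf (e '' Icc (min a b) (max a b))

lemma Minf_comm (e : ℝ → ℝ) (a b : ℝ) : Minf e a b = Minf e b a := by
  simp [Minf, min_comm, max_comm]

lemma Minf_split (σ : ℝ) (e : ℝ → ℝ) (henn : ∀ t ∈ Icc (0:ℝ) σ, 0 ≤ e t)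
    {x y z : ℝ} (hx : 0 ≤ x) (hxy : x ≤ y) (hyz : y ≤ z) (hz : z ≤ σ) :
    Minf e x z = min (Minf e x y) (Minf e y z) := by
  have hxz := hxy.trans hyz
  have hb : ∀ a b : ℝ, 0 ≤ a → b ≤ σ → BddBelow (e '' Icc a b) := fun a b ha hb =>
    ⟨0, fun w hw => by obtain ⟨p, hp, rfl⟩ := hw; exact henn p ⟨ha.trans hp.1, hp.2.trans hb⟩⟩
  rw [Minf, Minf, Minf, min_eq_left hxz, max_eq_right hxz, min_eq_left hxy, max_eq_right hxy,
    min_eq_left hyz, max_eq_right hyz, ← Icc_union_Icc_eq_Icc hxy hyz, image_union]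
  exact csInf_union (hb x y hx (hyz.trans hz)) ((nonempty_Icc.2 hxy).image e)
    (hb y z (hx.trans hxy) hz) ((nonempty_Icc.2 hyz).image e)

lemma minlem1 (p q r : ℝ) : min (p + r) (min p (min q r) + q) ≤ min p q + min q r := by
  rcases le_total p q with h1 | h1 <;> rcases le_total q r with h2 | h2
  · refine (min_le_right _ _).trans ?_
    rw [min_eq_left h2]
  · refine (min_le_left _ _).trans ?_
    rw [min_eq_left h1, min_eq_right h2]
  · refine (min_le_right _ _).trans ?_
    rw [min_eq_left h2]
  · refine (min_le_right _ _).trans ?_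
    rw [min_eq_right h1, min_eq_right h2]
    have := min_le_right p r
    linarith

lemma minlem2 (p q r : ℝ) : min (p + r) (min p q + min q r) ≤ min p (min q r) + q := by
  refine (min_le_right _ _).trans ?_
  rcases le_total p (min q r) with h | h
  · rw [min_eq_left h]
    have h1 := min_le_left p q
    have h2 := min_le_left q r
    linarith
  · rw [min_eq_right h]
    have h1 := min_le_right p q
    linarith

lemma key_ordered (σ : ℝ) (e : ℝ → ℝ) (henn : ∀ t ∈ Icc (0:ℝ) σ, 0 ≤ e t) {s t u v : ℝ}
    (hs : 0 ≤ s) (hst : s ≤ t) (hsu : s ≤ u) (huv : u ≤ v) (ht : t ≤ σ) (hv : v ≤ σ) :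
    min (Minf e s u + Minf e t v) (Minf e s v + Minf e t u) ≤ Minf e s t + Minf e u v := by
  rcases le_total t u with htu | hut
  · -- s ≤ t ≤ u ≤ v
    have h1 : Minf e s u = min (Minf e s t) (Minf e t u) :=
      Minf_split σ e henn hs hst htu (huv.trans hv)
    have h2 : Minf e t v = min (Minf e t u) (Minf e u v) :=
      Minf_split σ e henn (hs.trans hst) htu huv hv
    refine (min_le_left _ _).trans ?_
    rw [h1, h2]
    exact add_le_add (min_le_left _ _) (min_le_right _ _)
  · rcases le_total t v with htv | hvt
    · -- s ≤ u ≤ t ≤ v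
      have hq : Minf e t u = Minf e u t := Minf_comm e t u
      have h1 : Minf e s t = min (Minf e s u) (Minf e u t) :=
        Minf_split σ e henn hs hsu hut (htv.trans hv)
      have h2 : Minf e u v = min (Minf e u t) (Minf e t v) :=
        Minf_split σ e henn (hs.trans hsu) hut htv hv
      have h3 : Minf e s v = min (Minf e s u) (min (Minf e u t) (Minf e t v)) := by
        rw [Minf_split σ e henn hs hsu (hut.trans htv) hv,
          Minf_split σ e henn (hs.trans hsu) hut htv hv]
      rw [h1, h2, h3, hq]
      exact minlem1 _ _ _
    · -- s ≤ u ≤ v ≤ t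
      have hr : Minf e t v = Minf e v t := Minf_comm e t v
      have hq2 : Minf e t u = Minf e u t := Minf_comm e t u
      have h1 : Minf e s t = min (Minf e s u) (min (Minf e u v) (Minf e v t)) := by
        rw [Minf_split σ e henn hs hsu (huv.trans hvt) ht,
          Minf_split σ e henn (hs.trans hsu) huv hvt ht]
      have h2 : Minf e s v = min (Minf e s u) (Minf e u v) :=
        Minf_split σ e henn hs hsu huv hv
      have h3 : Minf e u t = min (Minf e u v) (Minf e v t) :=
        Minf_split σ e henn (hs.trans hsu) huv hvt ht
      rw [h1, h2, hr, hq2, h3]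
      exact minlem2 _ _ _

lemma key_all (σ : ℝ) (e : ℝ → ℝ) (henn : ∀ t ∈ Icc (0:ℝ) σ, 0 ≤ e t) {s t u v : ℝ}
    (hs : s ∈ Icc (0:ℝ) σ) (ht : t ∈ Icc (0:ℝ) σ) (hu : u ∈ Icc (0:ℝ) σ)
    (hv : v ∈ Icc (0:ℝ) σ) :
    min (Minf e s u + Minf e t v) (Minf e s v + Minf e t u) ≤ Minf e s t + Minf e u v := by
  rcases le_total s t with h1 | h1 <;> rcases le_total u v with h2 | h2
  · rcases le_total s u with h3 | h3
    · exact key_ordered σ e henn hs.1 h1 h3 h2 ht.2 hv.2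
    · have h := key_ordered σ e henn hu.1 h2 h3 h1 hv.2 ht.2
      simp only [Minf_comm e, min_comm, add_comm] at h ⊢
      exact h
  · rcases le_total s v with h3 | h3
    · have h := key_ordered σ e henn hs.1 h1 h3 h2 ht.2 hu.2
      simp only [Minf_comm e, min_comm, add_comm] at h ⊢
      exact h
    · have h := key_ordered σ e henn hv.1 h2 h3 h1 hu.2 ht.2
      simp only [Minf_comm e, min_comm, add_comm] at h ⊢
      exact h
  · rcases le_total t u with h3 | h3
    · have h := key_ordered σ e henn ht.1 h1 h3 h2 hs.2 hv.2
      simp only [Minf_comm e, min_comm, add_comm] at h ⊢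
      exact h
    · have h := key_ordered σ e henn hu.1 h2 h3 h1 hv.2 hs.2
      simp only [Minf_comm e, min_comm, add_comm] at h ⊢
      exact h
  · rcases le_total t v with h3 | h3
    · have h := key_ordered σ e henn ht.1 h1 h3 h2 hs.2 hu.2
      simp only [Minf_comm e, min_comm, add_comm] at h ⊢
      exact h
    · have h := key_ordered σ e henn hv.1 h2 h3 h1 hu.2 hs.2
      simp only [Minf_comm e, min_comm, add_comm] at h ⊢
      exact h

/-- The pseudo-metric coded by a continuous function satisfies the four-point
condition. -/
theorem tree_coded_distance_four_point (σ : ℝ) (hσ : 0 ≤ σ) (e : ℝ → ℝ)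
    (he : ContinuousOn e (Icc 0 σ)) (henn : ∀ t ∈ Icc (0:ℝ) σ, 0 ≤ e t) :
    let d : ℝ → ℝ → ℝ := fun s t => e s + e t - 2 * sInf (e '' Icc (min s t) (max s t))
    ∀ s ∈ Icc (0:ℝ) σ, ∀ t ∈ Icc (0:ℝ) σ, ∀ u ∈ Icc (0:ℝ) σ, ∀ v ∈ Icc (0:ℝ) σ,
      d s t + d u v ≤ max (d s u + d t v) (d s v + d t u) := by
  intro d s hs t ht u hu v hv
  have hd : ∀ a b : ℝ, d a b = e a + e b - 2 * Minf e a b := fun a b => rfl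
  have key := key_all σ e henn hs ht hu hv
  rw [hd s t, hd u v, hd s u, hd t v, hd s v, hd t u]
  rcases le_total (Minf e s u + Minf e t v) (Minf e s v + Minf e t u) with h | h
  · rw [min_eq_left h] at key
    exact le_max_of_le_left (by linarith)
  · rw [min_eq_right h] at key
    exact le_max_of_le_right (by linarith)
end

section
/- In the setting of a rooted ℝ-tree (T,d,ρ) and a non-decreasing continuous function g : T → ℝ₊, the subordinate pseudo-metric d^g(u,v) = g(u) + g(v) − 2 g(u ∧ v) satisfies the four-point condition: d^g(u,v) + d^g(w,z) ≤ max( d^g(u,w) + d^g(v,z), d^g(u,z) + d^g(v,w) ) for all u,v,w,z ∈ T. -/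
/-- Auxiliary: if `H` is symmetric and satisfies the Gromov-product hyperbolicity
inequality, and `H u w ≤ H u v`, then the four-sum inequality holds. -/
private lemma four_sum_key {T : Type*} (H : T → T → ℝ)
    (hsymm : ∀ x y, H x y = H y x)
    (hhyp : ∀ x y z, min (H x z) (H y z) ≤ H x y)
    (u v w z : T) (hA : H u w ≤ H u v) :
    min (H u w + H v z) (H u z + H v w) ≤ H u v + H w z := by
  by_contra hc
  push_neg at hc
  rw [lt_min_iff] at hc
  obtain ⟨h2, h3⟩ := hc
  have e1 : H w z < H v z := by linarith
  have e2 : H v w ≤ H w z := by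
    have h := hhyp w z v
    rw [min_le_iff] at h
    rcases h with h | h
    · rw [hsymm w v] at h; exact h
    · exfalso; rw [hsymm z v] at h; linarith
  have e3 : H u v < H u z := by linarith
  have e4 : H v z ≤ H u v := by
    have h := hhyp u v z
    rw [min_le_iff] at h
    rcases h with h | h
    · linarith
    · exact h
  have e5 : H u w ≤ H v w := by
    have h := hhyp v w u
    rw [min_le_iff] at h
    rcases h with h | h
    · rw [hsymm v u] at h; linarith
    · rw [hsymm w u] at h; exact h
  linarith

private lemma four_sum_of_hyp {T : Type*} (H : T → T → ℝ)
    (hsymm : ∀ x y, H x y = H y x)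
    (hhyp : ∀ x y z, min (H x z) (H y z) ≤ H x y)
    (u v w z : T) :
    min (H u w + H v z) (H u z + H v w) ≤ H u v + H w z := by
  have h := hhyp u v w
  rw [min_le_iff] at h
  rcases h with h | h
  · exact four_sum_key H hsymm hhyp u v w z h
  · have h' : H v w ≤ H v u := by rw [hsymm v u]; exact h
    have key := four_sum_key H hsymm hhyp v u w z h'
    rw [min_le_iff] at key
    apply min_le_iff.mpr
    rcases key with hk | hk
    · right; have := hsymm u v; linarith
    · left; have := hsymm u v; linarith

/-- The subordinate pseudo-metric `d^g(u,v) = g u + g v - 2 g (u ∧ v)` on a rooted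
ℝ-tree satisfies the four-point condition. -/
theorem subordinate_tree_four_point (T : Type*) [MetricSpace T] (ρ : T)
    (hfour : ∀ x y z w : T,
      dist x y + dist z w ≤ max (dist x z + dist y w) (dist x w + dist y z))
    (hcomp : ∀ x y v : T, dist ρ x + dist x v = dist ρ v →
      dist ρ y + dist y v = dist ρ v →
      (dist ρ x + dist x y = dist ρ y ∨ dist ρ y + dist y x = dist ρ x))
    (mca : T → T → T)
    (hmca₁ : ∀ u v, dist ρ (mca u v) + dist (mca u v) u = dist ρ u)
    (hmca₂ : ∀ u v, dist ρ (mca u v) + dist (mca u v) v = dist ρ v)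
    (hmca₃ : ∀ u v w, dist ρ w + dist w u = dist ρ u →
      dist ρ w + dist w v = dist ρ v →
      dist ρ w + dist w (mca u v) = dist ρ (mca u v))
    (hgromov : ∀ u v, dist ρ (mca u v) = (dist ρ u + dist ρ v - dist u v) / 2)
    (g : T → ℝ) (hgc : Continuous g) (hgnn : ∀ u, 0 ≤ g u)
    (hgmono : ∀ u v, dist ρ u + dist u v = dist ρ v → g u ≤ g v) :
    let dg : T → T → ℝ := fun u v => g u + g v - 2 * g (mca u v)
    ∀ u v w z : T, dg u v + dg w z ≤ max (dg u w + dg v z) (dg u z + dg v w) := by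
  intro dg u v w z
  -- heights of mca are symmetric
  have hh : ∀ x y, dist ρ (mca x y) = dist ρ (mca y x) := by
    intro x y
    rw [hgromov, hgromov, dist_comm x y]
    ring
  -- ancestors with reversed height comparison are equal
  have anc_eq : ∀ x y : T, dist ρ x + dist x y = dist ρ y →
      dist ρ y ≤ dist ρ x → x = y := by
    intro x y h hle
    have h0 : dist x y ≤ 0 := by linarith
    exact eq_of_dist_eq_zero (le_antisymm h0 dist_nonneg)
  -- mca is symmetric
  have mca_symm : ∀ x y, mca x y = mca y x := by
    intro x y
    have h1 := hmca₁ x y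
    have h2 := hmca₂ y x
    have hht := hh x y
    rcases hcomp (mca x y) (mca y x) x h1 h2 with h | h
    · exact anc_eq _ _ h hht.ge
    · exact (anc_eq _ _ h hht.le).symm
  -- hyperbolicity of heights of mca's
  have hyp_h : ∀ x y z, min (dist ρ (mca x z)) (dist ρ (mca y z)) ≤ dist ρ (mca x y) := by
    intro x y z
    have h4 := hfour x y ρ z
    rw [le_max_iff] at h4
    apply min_le_iff.mpr
    rcases h4 with h | h
    · right
      rw [hgromov, hgromov]
      rw [dist_comm x ρ] at h
      linarith
    · left
      rw [hgromov, hgromov]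
      rw [dist_comm y ρ] at h
      linarith
  -- hyperbolicity of g ∘ mca
  have gB : ∀ x y z, min (g (mca x z)) (g (mca y z)) ≤ g (mca x y) := by
    intro x y z
    rcases hcomp (mca x z) (mca x y) x (hmca₁ x z) (hmca₁ x y) with h | h
    · exact le_trans (min_le_left _ _) (hgmono _ _ h)
    · rcases hcomp (mca y z) (mca x y) y (hmca₁ y z) (hmca₂ x y) with h' | h'
      · exact le_trans (min_le_right _ _) (hgmono _ _ h')
      · have hz := hyp_h x y z
        rw [min_le_iff] at hz
        rcases hz with hz | hz
        · have heq : mca x y = mca x z := anc_eq _ _ h hz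
          rw [heq]
          exact min_le_left _ _
        · have heq : mca x y = mca y z := anc_eq _ _ h' hz
          rw [heq]
          exact min_le_right _ _
  have key := four_sum_of_hyp (fun a b => g (mca a b))
    (fun x y => by rw [mca_symm]) gB u v w z
  rw [min_le_iff] at key
  show g u + g v - 2 * g (mca u v) + (g w + g z - 2 * g (mca w z)) ≤
    max (g u + g w - 2 * g (mca u w) + (g v + g z - 2 * g (mca v z)))
        (g u + g z - 2 * g (mca u z) + (g v + g w - 2 * g (mca v w)))
  rw [le_max_iff]
  rcases key with hk | hk
  · left; linarith
  · right; linarith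
end

section
/- Let μ be a finite nonzero measure on [0,∞) and set m := μ([0,∞)). For 0 ≤ a < m define the pruned measure κ_a μ by κ_a μ([0,r]) := min( μ([0,r]), m − a ) for all r ≥ 0, and set H(ν) := sup(supp ν). Then the pushforward of the Lebesgue measure on [0,m] under the map u ↦ H(κ_u μ) equals μ. -/
open MeasureTheory Set Filter Topology

/-- Let `μ` be a finite nonzero measure on `[0,∞)` of total mass `m`.  For
`0 ≤ u < m`, the top of the support of the pruned measure `κ_u μ` (defined by
`κ_u μ([0,r]) = min(μ([0,r]), m - u)`) is the generalized quantile
`H(κ_u μ) = inf{ r : μ([0,r]) ≥ m - u }`.  The pushforward of Lebesgue measure on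
`[0,m]` under `u ↦ H(κ_u μ)` equals `μ`. -/
theorem pruning_quantile_pushforward (μ : Measure ℝ) [IsFiniteMeasure μ]
    (hne : μ ≠ 0) (hsupp : μ (Iio 0) = 0) :
    Measure.map
      (fun u : ℝ =>
        sInf {r : ℝ | (μ univ).toReal - u ≤ (μ (Iic r)).toReal})
      (volume.restrict (Icc 0 (μ univ).toReal)) = μ := by
  set m : ℝ := (μ univ).toReal with hm_def
  set F : ℝ → ℝ := fun r => (μ (Iic r)).toReal with hF_def
  set g : ℝ → ℝ := fun u => sInf {r : ℝ | m - u ≤ F r} with hg_def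
  have hμfin : ∀ s : Set ℝ, μ s ≠ ⊤ := fun s => measure_ne_top μ s
  have hm_pos : 0 < m :=
    ENNReal.toReal_pos (by simpa [Measure.measure_univ_eq_zero] using hne) (hμfin _)
  have hF_mono : Monotone F := fun a b hab =>
    ENNReal.toReal_mono (hμfin _) (measure_mono (Iic_subset_Iic.2 hab))
  have hF_le : ∀ r, F r ≤ m := fun r =>
    ENNReal.toReal_mono (hμfin _) (measure_mono (subset_univ _))
  have hF_neg : ∀ r < 0, F r = 0 := by
    intro r hr
    have h0 : μ (Iic r) = 0 :=
      measure_mono_null (fun y hy => lt_of_le_of_lt hy hr) hsupp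
    simp [hF_def, h0]
  have hS_ne : ∀ u, 0 < u → {r : ℝ | m - u ≤ F r}.Nonempty := by
    intro u hu
    have h1 : Tendsto (fun r => μ (Iic r)) atTop (𝓝 (μ univ)) := tendsto_measure_Iic_atTop μ
    have h2 : Tendsto F atTop (𝓝 m) := (ENNReal.tendsto_toReal (hμfin _)).comp h1
    have h3 : ∀ᶠ r in atTop, m - u < F r := h2.eventually (eventually_gt_nhds (by linarith))
    obtain ⟨r, hr⟩ := h3.exists
    exact ⟨r, hr.le⟩
  have hS_sub : ∀ u, u < m → {r : ℝ | m - u ≤ F r} ⊆ Ici 0 := by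
    intro u hu r hr
    by_contra hr0
    rw [mem_Ici, not_le] at hr0
    have := hF_neg r hr0
    simp only [mem_setOf_eq] at hr
    linarith
  have hS_bdd : ∀ u, u < m → BddBelow {r : ℝ | m - u ≤ F r} := fun u hu => ⟨0, hS_sub u hu⟩
  -- the infimum is attained: F (g u) ≥ m - u for u ∈ (0, m)
  have key : ∀ u ∈ Ioo (0:ℝ) m, m - u ≤ F (g u) := by
    intro u hu
    have hne' := hS_ne u hu.1
    have hbdd := hS_bdd u hu.2
    set t : ℝ := g u with ht_def
    have hseq : ∀ n : ℕ, m - u ≤ F (t + ((n : ℝ) + 1)⁻¹) := by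
      intro n
      have hpos : (0:ℝ) < ((n : ℝ) + 1)⁻¹ := by positivity
      have hlt : sInf {r : ℝ | m - u ≤ F r} < t + ((n : ℝ) + 1)⁻¹ := by
        rw [hg_def] at ht_def; linarith [le_refl t]
      obtain ⟨r, hrS, hrlt⟩ := (csInf_lt_iff hbdd hne').1 hlt
      exact le_trans hrS (hF_mono hrlt.le)
    have hinter : (⋂ n : ℕ, Iic (t + ((n : ℝ) + 1)⁻¹)) = Iic t := by
      ext y
      simp only [mem_iInter, mem_Iic]
      constructor
      · intro h
        refine le_of_forall_pos_le_add fun ε hε => ?_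
        obtain ⟨n, hn⟩ := exists_nat_one_div_lt hε
        have := h n
        rw [one_div] at hn
        linarith
      · intro h n
        have : (0:ℝ) < ((n : ℝ) + 1)⁻¹ := by positivity
        linarith
    have htend : Tendsto (fun n : ℕ => μ (Iic (t + ((n : ℝ) + 1)⁻¹))) atTop (𝓝 (μ (Iic t))) := by
      have hanti : Antitone fun n : ℕ => Iic (t + ((n : ℝ) + 1)⁻¹) := by
        intro a b hab
        apply Iic_subset_Iic.2
        have : ((a : ℝ) + 1)⁻¹ ≥ ((b : ℝ) + 1)⁻¹ := by
          apply inv_anti₀ (by positivity)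
          exact_mod_cast by exact_mod_cast add_le_add_left (Nat.cast_le.2 hab) 1
        linarith
      have := tendsto_measure_iInter_atTop
        (μ := μ) (s := fun n : ℕ => Iic (t + ((n : ℝ) + 1)⁻¹))
        (fun n => measurableSet_Iic.nullMeasurableSet) hanti ⟨0, hμfin _⟩
      rwa [hinter] at this
    have hle : ENNReal.ofReal (m - u) ≤ μ (Iic t) := by
      refine ge_of_tendsto' htend fun n => ?_
      have := hseq n
      calc ENNReal.ofReal (m - u) ≤ ENNReal.ofReal (F (t + ((n : ℝ) + 1)⁻¹)) :=
            ENNReal.ofReal_le_ofReal this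
        _ = μ (Iic (t + ((n : ℝ) + 1)⁻¹)) := ENNReal.ofReal_toReal (hμfin _)
    have := ENNReal.toReal_mono (hμfin (Iic t)) hle
    rwa [ENNReal.toReal_ofReal (by linarith [hu.2] : (0:ℝ) ≤ m - u)] at this
  -- characterization of the preimage
  have hkey_iff : ∀ u ∈ Ioo (0:ℝ) m, ∀ x : ℝ, (g u ≤ x ↔ m - F x ≤ u) := by
    intro u hu x
    constructor
    · intro h
      have := le_trans (key u hu) (hF_mono h)
      linarith
    · intro h
      exact csInf_le (hS_bdd u hu.2) (by simp only [mem_setOf_eq]; linarith)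
  have hg_anti : AntitoneOn g (Ioo (0:ℝ) m) := by
    intro u hu v hv huv
    exact csInf_le_csInf (hS_bdd v hv.2) (hS_ne u hu.1)
      (fun r hr => by simp only [mem_setOf_eq] at *; linarith)
  have hrC : volume.restrict (Icc (0:ℝ) m) = volume.restrict (Ioo (0:ℝ) m) :=
    (Measure.restrict_congr_set Ioo_ae_eq_Icc).symm
  rw [hrC]
  have hAE : AEMeasurable g (volume.restrict (Ioo (0:ℝ) m)) :=
    aemeasurable_restrict_of_antitoneOn measurableSet_Ioo hg_anti
  haveI hfin : IsFiniteMeasure (Measure.map g (volume.restrict (Ioo (0:ℝ) m))) := by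
    constructor
    rw [Measure.map_apply_of_aemeasurable hAE MeasurableSet.univ]
    simp only [preimage_univ, Measure.restrict_apply' measurableSet_Ioo, univ_inter,
      Real.volume_Ioo]
    exact ENNReal.ofReal_lt_top
  refine Measure.ext_of_Iic _ μ fun x => ?_
  rw [Measure.map_apply_of_aemeasurable hAE measurableSet_Iic,
    Measure.restrict_apply' measurableSet_Ioo]
  have hset : g ⁻¹' Iic x ∩ Ioo 0 m = Ioo 0 m ∩ Ici (m - F x) := by
    ext u
    simp only [mem_inter_iff, mem_preimage, mem_Iic, mem_Ioo, mem_Ici]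
    constructor
    · rintro ⟨hgx, hu⟩
      exact ⟨hu, (hkey_iff u hu x).1 hgx⟩
    · rintro ⟨hu, hx⟩
      exact ⟨(hkey_iff u hu x).2 hx, hu⟩
  rw [hset]
  have hμx : μ (Iic x) = ENNReal.ofReal (F x) := (ENNReal.ofReal_toReal (hμfin _)).symm
  have hFx0 : 0 ≤ m - F x := by linarith [hF_le x]
  have hFxnn : 0 ≤ F x := ENNReal.toReal_nonneg
  rcases eq_or_lt_of_le hFx0 with h0 | h0
  · have hI : Ioo (0:ℝ) m ∩ Ici (m - F x) = Ioo 0 m := by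
      apply inter_eq_self_of_subset_left
      intro y hy
      simp only [mem_Ici]
      rw [← h0]
      exact le_of_lt hy.1
    rw [hI, Real.volume_Ioo, hμx]
    congr 1
    linarith
  · have hI : Ioo (0:ℝ) m ∩ Ici (m - F x) = Ico (m - F x) m := by
      ext y
      simp only [mem_inter_iff, mem_Ioo, mem_Ici, mem_Ico]
      constructor
      · rintro ⟨⟨h1, h2⟩, h3⟩; exact ⟨h3, h2⟩
      · rintro ⟨h1, h2⟩; exact ⟨⟨by linarith, h2⟩, h1⟩
    rw [hI, Real.volume_Ico, hμx]
    congr 1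
    ring
end
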